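/- Let H = (V, E) be a hypergraph and let k be a positive integer. Then H is (AB)^k-free if and only if the hypergraph H_{2k+2} is (AB)^(k+1)-free, where H_{2k+2} is obtained from H by adding 2k+2 new vertices X = {x₁, …, x_{2k+2}} and taking edge set E ∪ {E ∪ {x} : E ∈ E, x ∈ X}. -/

import Mathlib

/-- `π` is a linear ordering of the vertex set `Vs`: a duplicate-free list
consisting of exactly the elements of `Vs`. -/
def IsOrderingOf {α : Type*} (Vs : Set α) (π : List α) : Prop :=
  π.Nodup ∧ ∀ v, v ∈ π ↔ v ∈ Vs

/-- The sets `A`, `B` form an alternating pattern of length `n` with respect to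
the ordering `π`: there are `n` vertices occurring in this order in `π`, those
at even positions belonging to `A \ B` and those at odd positions to `B \ A`.
For `n = 2k` this is an `(AB)^k` pattern; for `n = 2k+1` it is an `(AB)^k A`
pattern (so `n = 4` gives `ABAB` and `n = 5` gives `ABABA`). -/
def FormPattern {α : Type*} (n : ℕ) (A B : Set α) (π : List α) : Prop :=
  ∃ w : List α, w.Sublist π ∧ w.length = n ∧
    ∀ (i : ℕ) (h : i < w.length),
      (i % 2 = 0 → w[i]'h ∈ A \ B) ∧ (i % 2 = 1 → w[i]'h ∈ B \ A)

/-- `π` is a pattern-free ordering for the edge set `E`: no pair of edges forms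
an alternating pattern of length `n` with respect to `π`. -/
def FreeOrdering {α : Type*} (n : ℕ) (E : Set (Set α)) (π : List α) : Prop :=
  ∀ A ∈ E, ∀ B ∈ E, ¬ FormPattern n A B π

/-- Two orderings are equivalent if one is obtained from the other by cyclic
shifts, or by reversing the order and then applying cyclic shifts. -/
def EquivOrderings {α : Type*} (π₁ π₂ : List α) : Prop :=
  (∃ m, π₂ = π₁.rotate m) ∨ (∃ m, π₂ = π₁.reverse.rotate m)

/-- The hypergraph with vertex set `Vs` and edge set `E` admits an ordering of
its vertices that is free of alternating patterns of length `n`. -/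
def HasFreeOrdering {α : Type*} (n : ℕ) (Vs : Set α) (E : Set (Set α)) : Prop :=
  ∃ π : List α, IsOrderingOf Vs π ∧ FreeOrdering n E π

/-- The edge set of the hypergraph `H_t`: the original edges, together with
each original edge extended by one of the `t` new vertices. -/
def ExtendedEdges {α : Type*} (t : ℕ) (E : Set (Set α)) : Set (Set (α ⊕ Fin t)) :=
  ((fun A => Sum.inl '' A) '' E) ∪
    {B | ∃ A ∈ E, ∃ x : Fin t, B = Sum.inl '' A ∪ {Sum.inr x}}

/-! An `(AB)^k`-free ordering `π` of `H` yields the ordering of `H_{2k+2}` listing `π` first and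
the new vertices last: an extended edge contains at most one new vertex, so an alternating
pattern uses at most two of them, all at its end, and dropping them leaves an `(AB)^k` pattern
in `π`. Conversely, the old vertices of an `(AB)^(k+1)`-free ordering of `H_{2k+2}` are
`(AB)^k`-free: the `2k` vertices of a pattern cut the ordering into `2k+1` gaps holding the
`2k+2` new vertices, so some gap holds two of them, and extending the two edges of the pattern
by these (in the order dictated by the parity of the gap) gives an `(AB)^(k+1)` pattern. -/

open List

/-- The alternation condition of `FormPattern`, in recursive form. -/
def IsAlternating {α : Type*} (A B : Set α) : List α → Prop
  | [] => True
  | x :: w => x ∈ A \ B ∧ IsAlternating B A w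

namespace IsAlternating

variable {α β : Type*} {A B : Set α}

@[simp] lemma nil : IsAlternating A B [] := trivial

@[simp] lemma cons_iff {x : α} {w : List α} :
    IsAlternating A B (x :: w) ↔ x ∈ A \ B ∧ IsAlternating B A w := Iff.rfl

lemma iff_getElem {w : List α} :
    IsAlternating A B w ↔ ∀ (i : ℕ) (h : i < w.length),
      (i % 2 = 0 → w[i] ∈ A \ B) ∧ (i % 2 = 1 → w[i] ∈ B \ A) := by
  induction w generalizing A B with
  | nil => simp
  | cons x w ih =>
    rw [cons_iff, ih]
    constructor
    · rintro ⟨hx, hw⟩ (_ | i) hi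
      · simpa using hx
      · have := hw i (by simpa using hi)
        exact ⟨fun h => this.2 (by omega), fun h => this.1 (by omega)⟩
    · intro h
      refine ⟨(h 0 (by simp)).1 rfl, fun i hi => ?_⟩
      have := h (i + 1) (by simpa using hi)
      simp only [getElem_cons_succ] at this
      exact ⟨fun h => this.2 (by omega), fun h => this.1 (by omega)⟩

lemma take {w : List α} (h : IsAlternating A B w) (n : ℕ) : IsAlternating A B (w.take n) := by
  induction w generalizing A B n with
  | nil => simp
  | cons x w ih => cases n <;> simp_all

lemma of_append_left {l₁ l₂ : List α} (h : IsAlternating A B (l₁ ++ l₂)) :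
    IsAlternating A B l₁ := by
  simpa using h.take l₁.length

lemma of_append_right {l₁ l₂ : List α} (h : IsAlternating A B (l₁ ++ l₂)) :
    IsAlternating A B l₂ ∨ IsAlternating B A l₂ := by
  induction l₁ generalizing A B with
  | nil => exact Or.inl h
  | cons x l₁ ih => exact (ih h.2).symm

lemma map_iff {f : β → α} {w : List β} :
    IsAlternating A B (w.map f) ↔ IsAlternating (f ⁻¹' A) (f ⁻¹' B) w := by
  induction w generalizing A B with
  | nil => simp
  | cons x w ih => simp [ih]

lemma union {C D : Set α} {w : List α} (h : IsAlternating A B w) (hAD : Disjoint A D)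
    (hBC : Disjoint B C) : IsAlternating (A ∪ C) (B ∪ D) w := by
  induction w generalizing A B C D with
  | nil => trivial
  | cons x w ih =>
    obtain ⟨⟨hxA, hxB⟩, hw⟩ := h
    refine ⟨⟨Or.inl hxA, ?_⟩, ih hw hBC hAD⟩
    rintro (hxB' | hxD)
    exacts [hxB hxB', hAD.notMem_of_mem_left hxA hxD]

lemma length_le_two {S : Set α} {w : List α} (h : IsAlternating A B w) (hw : w.Nodup)
    (hS : ∀ x ∈ w, x ∈ S) (hA : (A ∩ S).Subsingleton) : w.length ≤ 2 := by
  match w, h with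
  | [], _ | [_], _ | [_, _], _ => simp
  | x :: y :: z :: r, ⟨hx, _, hz, _⟩ =>
    have : x = z := hA ⟨hx.1, hS x (by simp)⟩ ⟨hz.1, hS z (by simp)⟩
    simp_all

end IsAlternating

section Patterns

variable {α : Type*} {A B : Set α}

lemma formPattern_iff {n : ℕ} {π : List α} :
    FormPattern n A B π ↔ ∃ w, w <+ π ∧ w.length = n ∧ IsAlternating A B w := by
  simp only [FormPattern, IsAlternating.iff_getElem]

lemma formPattern_of_isAlternating {n : ℕ} {w π : List α} (hw : w <+ π)
    (h : IsAlternating A B w) (hn : n ≤ w.length) : FormPattern n A B π :=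
  formPattern_iff.2 ⟨w.take n, (take_sublist _ _).trans hw, by simp [hn], h.take n⟩

lemma exists_pair_sublist_of_two_le_countP {p : α → Bool} {l : List α}
    (h : 2 ≤ l.countP p) : ∃ x y, p x ∧ p y ∧ [x, y] <+ l := by
  rw [countP_eq_length_filter] at h
  match hl : l.filter p, h with
  | x :: y :: r, _ =>
    have hmem : ∀ z ∈ x :: y :: r, p z := fun z hz => (mem_filter.1 (hl ▸ hz)).2
    exact ⟨x, y, hmem x (by simp), hmem y (by simp),
      (by simp : [x, y] <+ x :: y :: r).trans (hl ▸ filter_sublist)⟩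

lemma IsAlternating.cons_cons_union {x y : α} {u : List α} (h : IsAlternating A B u)
    (hxy : x ≠ y) (hx : x ∉ B) (hy : y ∉ A) :
    IsAlternating (A ∪ {x}) (B ∪ {y}) (x :: y :: u) :=
  ⟨by simp [hx, hxy], by simp [hy, hxy.symm],
    h.union (Set.disjoint_singleton_right.2 hy) (Set.disjoint_singleton_right.2 hx)⟩

lemma IsAlternating.exists_insert_pair {p : α → Bool} {u σ : List α}
    (h : IsAlternating A B u) (hσ : σ.Nodup) (hu : u <+ σ)
    (hA : ∀ x, p x → x ∉ A) (hB : ∀ x, p x → x ∉ B)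
    (hcount : u.length + 2 ≤ σ.countP p) :
    ∃ x y, p x ∧ p y ∧ ∃ w, w <+ σ ∧ w.length = u.length + 2 ∧
      IsAlternating (A ∪ {x}) (B ∪ {y}) w := by
  induction u generalizing σ A B with
  | nil =>
    obtain ⟨x, y, hx, hy, hxy⟩ := exists_pair_sublist_of_two_le_countP hcount
    exact ⟨x, y, hx, hy, [x, y], hxy, rfl,
      h.cons_cons_union (by simpa using hxy.nodup hσ) (hB x hx) (hA y hy)⟩
  | cons a u ih =>
    obtain ⟨σ₁, σ₂, rfl, hu₂⟩ : ∃ σ₁ σ₂, σ = σ₁ ++ a :: σ₂ ∧ u <+ σ₂ := by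
      obtain ⟨r₁, r₂, rfl, ha, hur⟩ := cons_sublist_iff.1 hu
      obtain ⟨s, t, rfl⟩ := append_of_mem ha
      exact ⟨s, t ++ r₂, by simp, hur.trans (sublist_append_right t r₂)⟩
    have hpa : p a = false := by
      by_contra hpa
      exact hA a (by simpa using hpa) h.1.1
    by_cases h₁ : 2 ≤ σ₁.countP p
    · obtain ⟨x, y, hx, hy, hxy⟩ := exists_pair_sublist_of_two_le_countP h₁
      have hxy' : x ≠ y := by simpa using (hxy.trans (sublist_append_left _ _)).nodup hσ
      exact ⟨x, y, hx, hy, [x, y] ++ a :: u, hxy.append (hu₂.cons_cons a), by simp,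
        h.cons_cons_union hxy' (hB x hx) (hA y hy)⟩
    · have h₂ : u.length + 2 ≤ σ₂.countP p := by
        simp only [countP_append, countP_cons, hpa, Bool.false_eq_true, ite_false,
          length_cons] at hcount
        omega
      -- past `a` the roles of `A` and `B` are exchanged, hence the swapped pair below
      obtain ⟨x, y, hx, hy, w, hw, hwlen, hwalt⟩ :=
        ih h.2 ((sublist_append_right _ _).nodup hσ).of_cons hu₂ hB hA h₂
      have hax : a ≠ x := by rintro rfl; simp [hpa] at hx
      exact ⟨y, x, hy, hx, a :: w, (hw.cons_cons a).trans (sublist_append_right _ _),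
        by simp [hwlen], ⟨by simp [h.1.1, h.1.2, hax], hwalt⟩⟩

end Patterns

section Orderings

variable {V W : Type*}

lemma isOrderingOf_finRange (t : ℕ) : IsOrderingOf Set.univ (finRange t) :=
  ⟨nodup_finRange t, by simp⟩

lemma IsOrderingOf.map_inl_append_map_inr {π : List V} {ρ : List W}
    (hπ : IsOrderingOf Set.univ π) (hρ : IsOrderingOf Set.univ ρ) :
    IsOrderingOf Set.univ (π.map Sum.inl ++ ρ.map Sum.inr) := by
  refine ⟨nodup_append.2 ⟨hπ.1.map Sum.inl_injective, hρ.1.map Sum.inr_injective, by simp⟩, ?_⟩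
  rintro (v | w) <;> simp [hπ.2, hρ.2]

lemma IsOrderingOf.filterMap_getLeft {σ : List (V ⊕ W)} (h : IsOrderingOf Set.univ σ) :
    IsOrderingOf Set.univ (σ.filterMap Sum.getLeft?) :=
  ⟨h.1.filterMap (by simp), by simp [h.2]⟩

lemma map_inl_filterMap_getLeft_sublist (σ : List (V ⊕ W)) :
    (σ.filterMap Sum.getLeft?).map Sum.inl <+ σ := by
  induction σ with
  | nil => simp
  | cons x σ ih =>
    cases x with
    | inl v => simpa using ih.cons_cons (Sum.inl v)
    | inr w => exact ih.cons (Sum.inr w)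

lemma IsOrderingOf.card_le_countP_isRight [Fintype W] {σ : List (V ⊕ W)}
    (h : IsOrderingOf Set.univ σ) : Fintype.card W ≤ σ.countP Sum.isRight := by
  have hsub : (Finset.univ : Finset W).toList.map Sum.inr <+~ σ.filter Sum.isRight :=
    subperm_of_subset ((Finset.nodup_toList _).map Sum.inr_injective) (by simp [subset_def, h.2])
  simpa [countP_eq_length_filter] using hsub.length_le

end Orderings

section Extension

variable {V : Type*} {t : ℕ} {E : Set (Set V)} {A : Set (V ⊕ Fin t)}

lemma preimage_inl_mem_of_mem_extendedEdges (hA : A ∈ ExtendedEdges t E) :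
    Sum.inl ⁻¹' A ∈ E := by
  rcases hA with ⟨A, hA, rfl⟩ | ⟨A, hA, x, rfl⟩ <;>
    · convert hA using 1
      ext
      simp

lemma inter_range_inr_subsingleton_of_mem_extendedEdges (hA : A ∈ ExtendedEdges t E) :
    (A ∩ Set.range Sum.inr).Subsingleton := by
  rcases hA with ⟨A, -, rfl⟩ | ⟨A, -, x, rfl⟩ <;>
    rintro _ ⟨h₁, y₁, rfl⟩ _ ⟨h₂, y₂, rfl⟩ <;> simp_all

theorem HasFreeOrdering.extendedEdges {n : ℕ} (h : HasFreeOrdering n Set.univ E) :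
    HasFreeOrdering (n + 2) Set.univ (ExtendedEdges t E) := by
  obtain ⟨π, hπ, hfree⟩ := h
  have hσ := hπ.map_inl_append_map_inr (isOrderingOf_finRange t)
  refine ⟨_, hσ, fun A hA B hB hpat => ?_⟩
  obtain ⟨w, hw, hwlen, halt⟩ := formPattern_iff.1 hpat
  have hnd := hw.nodup hσ.1
  obtain ⟨w₁, w₂, rfl, hw₁, hw₂⟩ := sublist_append_iff.1 hw
  obtain ⟨w₀, hw₀, rfl⟩ := sublist_map_iff.1 hw₁
  have hw₂len : w₂.length ≤ 2 := by
    have hnew : ∀ x ∈ w₂, x ∈ Set.range Sum.inr := fun x hx => by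
      obtain ⟨y, -, rfl⟩ := mem_map.1 (hw₂.subset hx)
      exact ⟨y, rfl⟩
    rcases halt.of_append_right with h₂ | h₂
    · exact h₂.length_le_two hnd.of_append_right hnew
        (inter_range_inr_subsingleton_of_mem_extendedEdges hA)
    · exact h₂.length_le_two hnd.of_append_right hnew
        (inter_range_inr_subsingleton_of_mem_extendedEdges hB)
  refine hfree _ (preimage_inl_mem_of_mem_extendedEdges hA)
    _ (preimage_inl_mem_of_mem_extendedEdges hB) ?_
  exact formPattern_of_isAlternating hw₀ (IsAlternating.map_iff.1 halt.of_append_left)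
    (by simp only [length_append, length_map] at hwlen; omega)

theorem HasFreeOrdering.of_extendedEdges {n : ℕ}
    (h : HasFreeOrdering (n + 2) Set.univ (ExtendedEdges t E)) (ht : n + 2 ≤ t) :
    HasFreeOrdering n Set.univ E := by
  obtain ⟨σ, hσ, hfree⟩ := h
  refine ⟨_, hσ.filterMap_getLeft, fun A hA B hB hpat => ?_⟩
  obtain ⟨w, hw, rfl, halt⟩ := formPattern_iff.1 hpat
  have hu : w.map Sum.inl <+ σ := (hw.map _).trans (map_inl_filterMap_getLeft_sublist σ)
  have hinl : IsAlternating (Sum.inl '' A : Set (V ⊕ Fin t)) (Sum.inl '' B) (w.map Sum.inl) := by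
    rwa [IsAlternating.map_iff, Set.preimage_image_eq _ Sum.inl_injective,
      Set.preimage_image_eq _ Sum.inl_injective]
  have hnew : ∀ (S : Set V) (x : V ⊕ Fin t), x.isRight → x ∉ Sum.inl '' S := by
    rintro S x hx ⟨v, -, rfl⟩
    simp at hx
  obtain ⟨x, y, hx, hy, w', hw', hlen, hext⟩ :=
    hinl.exists_insert_pair hσ.1 hu (hnew A) (hnew B)
      (by simpa using ht.trans (by simpa using hσ.card_le_countP_isRight))
  obtain ⟨a, rfl⟩ := Sum.isRight_iff.1 hx
  obtain ⟨b, rfl⟩ := Sum.isRight_iff.1 hy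
  exact hfree _ (Or.inr ⟨A, hA, a, rfl⟩) _ (Or.inr ⟨B, hB, b, rfl⟩)
    (formPattern_iff.2 ⟨w', hw', by simpa using hlen, hext⟩)

end Extension

theorem ABk_free_iff_extended_general {V : Type*} (E : Set (Set V))
    (k : ℕ) :
    HasFreeOrdering (2 * k) (Set.univ : Set V) E ↔
      HasFreeOrdering (2 * k + 2) (Set.univ : Set (V ⊕ Fin (2 * k + 2)))
        (ExtendedEdges (2 * k + 2) E) :=
  ⟨HasFreeOrdering.extendedEdges, fun h => h.of_extendedEdges le_rfl⟩

/-- **Lemma (even–even).** A hypergraph `H = (V, E)` is `(AB)^k`-free if and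
only if the hypergraph `H_{2k+2}`, obtained from `H` by adding `2k+2` new
vertices and extending each edge by each single new vertex, is
`(AB)^(k+1)`-free. (An `(AB)^k` pattern has length `2k`; an `(AB)^(k+1)`
pattern has length `2k + 2`.) -/
theorem ABk_free_iff_extended {V : Type*} [Fintype V] (E : Set (Set V))
    (k : ℕ) (hk : 0 < k) :
    HasFreeOrdering (2 * k) (Set.univ : Set V) E ↔
      HasFreeOrdering (2 * k + 2) (Set.univ : Set (V ⊕ Fin (2 * k + 2)))
        (ExtendedEdges (2 * k + 2) E) :=
  ABk_free_iff_extended_general E k
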